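/- arXiv:0802.0569 — 4 statements merged into one kernel-verified Lean document; each statement's English description precedes it below -/
import Mathlib

section
/- Existence part of Theorem 2.1 (torsion condition, pointwise form): Let U, U₁, U₂ ∈ V with associated 1-forms u, u₁, u₂, let f₁, f₂ ∈ ℝ, let φ₁ : V → V be a symmetric linear map and φ₂ : V → V a skew-symmetric linear map, and set φ = φ₁ + φ₂. Define H(X,Y) = u(Y)·φ₁X − u(X)·φ₂Y − ⟪φ₁X,Y⟫·U − f₁·(u₁(X)·Y + u₁(Y)·X − ⟪X,Y⟫·U₁) − f₂·⟪X,Y⟫·U₂. Then for all X, Y ∈ V one has H(X,Y) − H(Y,X) = u(Y)·φX − u(X)·φY; that is, the connection ∇̃ = ∇ + H has torsion T(X,Y) = u(Y)φX − u(X)φY. -/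
open RealInnerProductSpace

/-- Existence part of Theorem 2.1 (torsion condition, pointwise form). -/
theorem new_connection_torsion
    {V : Type*} [NormedAddCommGroup V] [InnerProductSpace ℝ V]
    (U U₁ U₂ : V) (u u₁ u₂ : V → ℝ)
    (hu : ∀ X, u X = ⟪U, X⟫) (hu₁ : ∀ X, u₁ X = ⟪U₁, X⟫)
    (hu₂ : ∀ X, u₂ X = ⟪U₂, X⟫)
    (f₁ f₂ : ℝ) (φ₁ φ₂ φ : V →ₗ[ℝ] V)
    (hφ₁ : ∀ X Y, ⟪φ₁ X, Y⟫ = ⟪X, φ₁ Y⟫)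
    (hφ₂ : ∀ X Y, ⟪φ₂ X, Y⟫ = -⟪X, φ₂ Y⟫)
    (hφ : φ = φ₁ + φ₂)
    (H : V → V → V)
    (hH : ∀ X Y, H X Y =
      u Y • φ₁ X - u X • φ₂ Y - ⟪φ₁ X, Y⟫ • U
        - f₁ • (u₁ X • Y + u₁ Y • X - ⟪X, Y⟫ • U₁)
        - f₂ • (⟪X, Y⟫ • U₂)) :
    ∀ X Y : V, H X Y - H Y X = u Y • φ X - u X • φ Y := by
  intro X Y
  rw [hH, hH, hφ]
  simp only [LinearMap.add_apply, smul_add]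
  rw [hφ₁ X Y, real_inner_comm X Y, real_inner_comm X (φ₁ Y)]
  abel
end

section
/- Existence part of Theorem 2.1 (metric condition, pointwise form): Let U, U₁, U₂ ∈ V with associated 1-forms u, u₁, u₂, let f₁, f₂ ∈ ℝ, let φ₁ : V → V be a symmetric linear map and φ₂ : V → V a skew-symmetric linear map. Define H(X,Y) = u(Y)·φ₁X − u(X)·φ₂Y − ⟪φ₁X,Y⟫·U − f₁·(u₁(X)·Y + u₁(Y)·X − ⟪X,Y⟫·U₁) − f₂·⟪X,Y⟫·U₂. Then for all X, Y, Z ∈ V one has −⟪H(X,Y),Z⟫ − ⟪H(X,Z),Y⟫ = 2f₁·u₁(X)·⟪Y,Z⟫ + f₂·(u₂(Y)·⟪X,Z⟫ + u₂(Z)·⟪X,Y⟫); that is, the connection ∇̃ = ∇ + H satisfies (∇̃_X g)(Y,Z) = 2f₁u₁(X)g(Y,Z) + f₂{u₂(Y)g(X,Z) + u₂(Z)g(X,Y)}. -/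
open RealInnerProductSpace

/-- Existence part of Theorem 2.1 (metric condition, pointwise form). -/
theorem new_connection_metric
    {V : Type*} [NormedAddCommGroup V] [InnerProductSpace ℝ V]
    (U U₁ U₂ : V) (u u₁ u₂ : V → ℝ)
    (hu : ∀ X, u X = ⟪U, X⟫) (hu₁ : ∀ X, u₁ X = ⟪U₁, X⟫)
    (hu₂ : ∀ X, u₂ X = ⟪U₂, X⟫)
    (f₁ f₂ : ℝ) (φ₁ φ₂ : V →ₗ[ℝ] V)
    (hφ₁ : ∀ X Y, ⟪φ₁ X, Y⟫ = ⟪X, φ₁ Y⟫)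
    (hφ₂ : ∀ X Y, ⟪φ₂ X, Y⟫ = -⟪X, φ₂ Y⟫)
    (H : V → V → V)
    (hH : ∀ X Y, H X Y =
      u Y • φ₁ X - u X • φ₂ Y - ⟪φ₁ X, Y⟫ • U
        - f₁ • (u₁ X • Y + u₁ Y • X - ⟪X, Y⟫ • U₁)
        - f₂ • (⟪X, Y⟫ • U₂)) :
    ∀ X Y Z : V, -⟪H X Y, Z⟫ - ⟪H X Z, Y⟫ =
      2 * f₁ * u₁ X * ⟪Y, Z⟫ + f₂ * (u₂ Y * ⟪X, Z⟫ + u₂ Z * ⟪X, Y⟫) := by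
  intro X Y Z
  simp only [hH, hu, hu₁, hu₂, inner_sub_left, inner_add_left, inner_smul_left,
    real_inner_smul_left, RCLike.conj_to_real]
  have h1 : ⟪φ₁ X, Z⟫ = ⟪X, φ₁ Z⟫ := hφ₁ X Z
  have h2 : ⟪φ₁ X, Y⟫ = ⟪X, φ₁ Y⟫ := hφ₁ X Y
  have h3 : ⟪φ₂ Y, Z⟫ = -⟪Y, φ₂ Z⟫ := hφ₂ Y Z
  have h4 : ⟪U, Z⟫ = ⟪Z, U⟫ := real_inner_comm _ _
  have h5 : ⟪U, Y⟫ = ⟪Y, U⟫ := real_inner_comm _ _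
  have h6 : ⟪Y, Z⟫ = ⟪Z, Y⟫ := real_inner_comm _ _
  have h7 : ⟪X, Y⟫ = ⟪Y, X⟫ := real_inner_comm _ _
  have h8 : ⟪X, Z⟫ = ⟪Z, X⟫ := real_inner_comm _ _
  have h9 : ⟪U₁, Z⟫ = ⟪Z, U₁⟫ := real_inner_comm _ _
  have h10 : ⟪U₁, Y⟫ = ⟪Y, U₁⟫ := real_inner_comm _ _
  have h11 : ⟪U₂, Z⟫ = ⟪Z, U₂⟫ := real_inner_comm _ _
  have h12 : ⟪U₂, Y⟫ = ⟪Y, U₂⟫ := real_inner_comm _ _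
  have h13 : ⟪φ₂ Y, Z⟫ + ⟪φ₂ Z, Y⟫ = 0 := by
    rw [hφ₂ Y Z, real_inner_comm Y (φ₂ Z)]; ring
  ring_nf
  linarith [mul_eq_zero_of_right (⟪U, X⟫ : ℝ) h13, congrArg (fun t => f₁ * ⟪U₁, X⟫ * t) h6,
    mul_add (⟪U, X⟫ : ℝ) ⟪φ₂ Y, Z⟫ ⟪φ₂ Z, Y⟫]
end

section
/- Uniqueness part of Theorem 2.1 (pointwise form): Let U, U₁, U₂ ∈ V with associated 1-forms u, u₁, u₂, let f₁, f₂ ∈ ℝ, let φ₁ : V → V be a symmetric linear map and φ₂ : V → V a skew-symmetric linear map, and set φ = φ₁ + φ₂. Suppose H : V × V → V is a bilinear map such that for all X, Y, Z ∈ V: (i) H(X,Y) − H(Y,X) = u(Y)·φX − u(X)·φY, and (ii) −⟪H(X,Y),Z⟫ − ⟪H(X,Z),Y⟫ = 2f₁·u₁(X)·⟪Y,Z⟫ + f₂·(u₂(Y)·⟪X,Z⟫ + u₂(Z)·⟪X,Y⟫). Then necessarily H(X,Y) = u(Y)·φ₁X − u(X)·φ₂Y − ⟪φ₁X,Y⟫·U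 − f₁·(u₁(X)·Y + u₁(Y)·X − ⟪X,Y⟫·U₁) − f₂·⟪X,Y⟫·U₂ for all X, Y ∈ V. -/
open RealInnerProductSpace

/-- Uniqueness part of Theorem 2.1 (pointwise form). -/
theorem new_connection_unique
    {V : Type*} [NormedAddCommGroup V] [InnerProductSpace ℝ V]
    (U U₁ U₂ : V) (u u₁ u₂ : V → ℝ)
    (hu : ∀ X, u X = ⟪U, X⟫) (hu₁ : ∀ X, u₁ X = ⟪U₁, X⟫)
    (hu₂ : ∀ X, u₂ X = ⟪U₂, X⟫)
    (f₁ f₂ : ℝ) (φ₁ φ₂ φ : V →ₗ[ℝ] V)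
    (hφ₁ : ∀ X Y, ⟪φ₁ X, Y⟫ = ⟪X, φ₁ Y⟫)
    (hφ₂ : ∀ X Y, ⟪φ₂ X, Y⟫ = -⟪X, φ₂ Y⟫)
    (hφ : φ = φ₁ + φ₂)
    (H : V →ₗ[ℝ] V →ₗ[ℝ] V)
    (htorsion : ∀ X Y : V, H X Y - H Y X = u Y • φ X - u X • φ Y)
    (hmetric : ∀ X Y Z : V, -⟪H X Y, Z⟫ - ⟪H X Z, Y⟫ =
      2 * f₁ * u₁ X * ⟪Y, Z⟫ + f₂ * (u₂ Y * ⟪X, Z⟫ + u₂ Z * ⟪X, Y⟫)) :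
    ∀ X Y : V, H X Y =
      u Y • φ₁ X - u X • φ₂ Y - ⟪φ₁ X, Y⟫ • U
        - f₁ • (u₁ X • Y + u₁ Y • X - ⟪X, Y⟫ • U₁)
        - f₂ • (⟪X, Y⟫ • U₂) := by
  set d : V → V → V → ℝ := fun X Y Z =>
    ⟪H X Y, Z⟫ - (u Y * ⟪φ₁ X, Z⟫ - u X * ⟪φ₂ Y, Z⟫ - ⟪φ₁ X, Y⟫ * ⟪U, Z⟫
      - f₁ * (u₁ X * ⟪Y, Z⟫ + u₁ Y * ⟪X, Z⟫ - ⟪X, Y⟫ * ⟪U₁, Z⟫)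
      - f₂ * (⟪X, Y⟫ * ⟪U₂, Z⟫)) with hd
  have ht : ∀ X Y Z : V, ⟪H X Y, Z⟫ - ⟪H Y X, Z⟫
      = u Y * (⟪φ₁ X, Z⟫ + ⟪φ₂ X, Z⟫) - u X * (⟪φ₁ Y, Z⟫ + ⟪φ₂ Y, Z⟫) := by
    intro X Y Z
    have h := congrArg (fun W => ⟪W, Z⟫) (htorsion X Y)
    simp only [hφ, LinearMap.add_apply, inner_sub_left, inner_add_left,
      real_inner_smul_left] at h
    linarith
  have hsym : ∀ X Y Z : V, d X Y Z = d Y X Z := by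
    intro X Y Z
    have h := ht X Y Z
    have h1 := hφ₁ X Y
    have h2 := real_inner_comm X Y
    have h3 := real_inner_comm X (φ₁ Y)
    simp only [hd]
    linear_combination h + ⟪U, Z⟫ * h1 - ⟪U, Z⟫ * h3 + (f₁ * ⟪U₁, Z⟫ - f₂ * ⟪U₂, Z⟫) * h2
  have hskew : ∀ X Y Z : V, d X Y Z = -(d X Z Y) := by
    intro X Y Z
    have h := hmetric X Y Z
    have h1 := hφ₂ Y Z
    have h2 := real_inner_comm Y (φ₂ Z)
    have h3 := hφ₁ X Y
    have h4 := hφ₁ X Z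
    have h5 := real_inner_comm X (φ₁ Y)
    have h6 := real_inner_comm X (φ₁ Z)
    have h7 := real_inner_comm Y Z
    have h8 := real_inner_comm X Y
    have h9 := real_inner_comm X Z
    have hu' := hu X; have hu₁X := hu₁ X; have hu₁Y := hu₁ Y; have hu₁Z := hu₁ Z
    have hu₂Y := hu₂ Y; have hu₂Z := hu₂ Z
    have huY := hu Y
    have huZ := hu Z
    simp only [hd]
    linear_combination (-1 : ℝ) * h - ⟪φ₁ X, Y⟫ * huZ - ⟪φ₁ X, Z⟫ * huY
      + u X * (h1 + h2) + f₁ * u₁ X * h7 + f₁ * ⟪X, Z⟫ * hu₁Y + f₁ * ⟪X, Y⟫ * hu₁Z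
      - f₂ * ⟪X, Y⟫ * hu₂Z - f₂ * ⟪X, Z⟫ * hu₂Y
  have hzero : ∀ X Y Z : V, d X Y Z = 0 := by
    intro X Y Z
    have e1 := hsym X Y Z
    have e2 := hskew Y X Z
    have e3 := hsym Y Z X
    have e4 := hskew Z Y X
    have e5 := hsym Z X Y
    have e6 := hskew X Z Y
    linarith
  intro X Y
  apply ext_inner_right ℝ
  intro Z
  have h := hzero X Y Z
  simp only [hd] at h
  simp only [inner_sub_left, inner_add_left, real_inner_smul_left]
  linarith
end

section
/- Theorem 2.1 (pointwise form, existence and uniqueness): Let U, U₁, U₂ ∈ V with associated 1-forms u, u₁, u₂, let f₁, f₂ ∈ ℝ, let φ₁ : V → V be a symmetric linear map and φ₂ : V → V a skew-symmetric linear map, and set φ = φ₁ + φ₂. Then there exists a unique bilinear map H : V × V → V such that for all X, Y, Z ∈ V: (i) H(X,Y) − H(Y,X) = u(Y)·φX − u(X)·φY, and (ii) −⟪H(X,Y),Z⟫ − ⟪H(X,Z),Y⟫ = 2f₁·u₁(X)·⟪Y,Z⟫ + f₂·(u₂(Y)·⟪X,Z⟫ + u₂(Z)·⟪X,Y⟫);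 this H is given by H(X,Y) = u(Y)·φ₁X − u(X)·φ₂Y − ⟪φ₁X,Y⟫·U − f₁·(u₁(X)·Y + u₁(Y)·X − ⟪X,Y⟫·U₁) − f₂·⟪X,Y⟫·U₂. -/
open RealInnerProductSpace

/-- Theorem 2.1 (pointwise form, existence and uniqueness):
there is a unique bilinear map `H` with the prescribed torsion and
metric-derivative behaviour, and it is given by the explicit formula. -/
theorem new_connection_exists_unique
    {V : Type*} [NormedAddCommGroup V] [InnerProductSpace ℝ V]
    (U U₁ U₂ : V) (u u₁ u₂ : V → ℝ)
    (hu : ∀ X, u X = ⟪U, X⟫) (hu₁ : ∀ X, u₁ X = ⟪U₁, X⟫)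
    (hu₂ : ∀ X, u₂ X = ⟪U₂, X⟫)
    (f₁ f₂ : ℝ) (φ₁ φ₂ φ : V →ₗ[ℝ] V)
    (hφ₁ : ∀ X Y, ⟪φ₁ X, Y⟫ = ⟪X, φ₁ Y⟫)
    (hφ₂ : ∀ X Y, ⟪φ₂ X, Y⟫ = -⟪X, φ₂ Y⟫)
    (hφ : φ = φ₁ + φ₂) :
    (∃! H : V →ₗ[ℝ] V →ₗ[ℝ] V,
      (∀ X Y : V, H X Y - H Y X = u Y • φ X - u X • φ Y) ∧
      (∀ X Y Z : V, -⟪H X Y, Z⟫ - ⟪H X Z, Y⟫ =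
        2 * f₁ * u₁ X * ⟪Y, Z⟫ + f₂ * (u₂ Y * ⟪X, Z⟫ + u₂ Z * ⟪X, Y⟫))) ∧
    (∀ H : V →ₗ[ℝ] V →ₗ[ℝ] V,
      ((∀ X Y : V, H X Y - H Y X = u Y • φ X - u X • φ Y) ∧
       (∀ X Y Z : V, -⟪H X Y, Z⟫ - ⟪H X Z, Y⟫ =
         2 * f₁ * u₁ X * ⟪Y, Z⟫ + f₂ * (u₂ Y * ⟪X, Z⟫ + u₂ Z * ⟪X, Y⟫))) →
      ∀ X Y : V, H X Y =
        u Y • φ₁ X - u X • φ₂ Y - ⟪φ₁ X, Y⟫ • U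
          - f₁ • (u₁ X • Y + u₁ Y • X - ⟪X, Y⟫ • U₁)
          - f₂ • (⟪X, Y⟫ • U₂)) := by
  -- the explicit bilinear map
  set F : V →ₗ[ℝ] V →ₗ[ℝ] V := LinearMap.mk₂ ℝ
    (fun X Y => ⟪U, Y⟫ • φ₁ X - ⟪U, X⟫ • φ₂ Y - ⟪φ₁ X, Y⟫ • U
      - f₁ • (⟪U₁, X⟫ • Y + ⟪U₁, Y⟫ • X - ⟪X, Y⟫ • U₁) - f₂ • (⟪X, Y⟫ • U₂))
    (by intro m m' n
        simp only [inner_add_right, inner_add_left, map_add, smul_add, add_smul]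
        module)
    (by intro c m n
        simp only [real_inner_smul_right, real_inner_smul_left, map_smul, smul_smul]
        module)
    (by intro m n n'
        simp only [inner_add_right, inner_add_left, map_add, smul_add, add_smul]
        module)
    (by intro c m n
        simp only [real_inner_smul_right, real_inner_smul_left, map_smul, smul_smul]
        module)
    with hF
  have hFapp : ∀ X Y, F X Y = ⟪U, Y⟫ • φ₁ X - ⟪U, X⟫ • φ₂ Y - ⟪φ₁ X, Y⟫ • U
      - f₁ • (⟪U₁, X⟫ • Y + ⟪U₁, Y⟫ • X - ⟪X, Y⟫ • U₁) - f₂ • (⟪X, Y⟫ • U₂) := by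
    intro X Y; rw [hF]; rfl
  have hφ₁' : ∀ X Y, ⟪φ₁ X, Y⟫ = ⟪φ₁ Y, X⟫ := by
    intro X Y; rw [hφ₁, real_inner_comm]
  have hφ₂' : ∀ X Y, ⟪φ₂ X, Y⟫ = -⟪φ₂ Y, X⟫ := by
    intro X Y; rw [hφ₂, real_inner_comm]
  have hF1 : ∀ X Y : V, F X Y - F Y X = u Y • φ X - u X • φ Y := by
    intro X Y
    rw [hFapp, hFapp, hu, hu, hφ, hφ₁' Y X, real_inner_comm Y X]
    simp only [LinearMap.add_apply]
    module
  have hF2 : ∀ X Y Z : V, -⟪F X Y, Z⟫ - ⟪F X Z, Y⟫ =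
      2 * f₁ * u₁ X * ⟪Y, Z⟫ + f₂ * (u₂ Y * ⟪X, Z⟫ + u₂ Z * ⟪X, Y⟫) := by
    intro X Y Z
    rw [hFapp, hFapp, hu₁, hu₂, hu₂]
    simp only [inner_sub_left, inner_add_left, inner_smul_left, real_inner_smul_left,
      conj_trivial]
    rw [hφ₂' Y Z, real_inner_comm Z Y]
    ring
  -- key uniqueness lemma: any solution agrees with `F`
  have key : ∀ H : V →ₗ[ℝ] V →ₗ[ℝ] V,
      ((∀ X Y : V, H X Y - H Y X = u Y • φ X - u X • φ Y) ∧
       (∀ X Y Z : V, -⟪H X Y, Z⟫ - ⟪H X Z, Y⟫ =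
         2 * f₁ * u₁ X * ⟪Y, Z⟫ + f₂ * (u₂ Y * ⟪X, Z⟫ + u₂ Z * ⟪X, Y⟫))) →
      ∀ X Y : V, H X Y = F X Y := by
    intro H ⟨h1, h2⟩ X Y
    set s : V → V → V → ℝ := fun X Y Z => ⟪H X Y - F X Y, Z⟫ with hs
    have hsymm : ∀ X Y Z, s X Y Z = s Y X Z := by
      intro X Y Z
      have hD : H X Y - F X Y = H Y X - F Y X := by
        rw [sub_eq_sub_iff_sub_eq_sub, h1, hF1]
      simp only [hs, hD]
    have hskew : ∀ X Y Z, s X Y Z = - s X Z Y := by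
      intro X Y Z
      have e1 := h2 X Y Z
      have e2 := hF2 X Y Z
      simp only [hs, inner_sub_left]
      linarith
    have hzero : ∀ X Y Z, s X Y Z = 0 := by
      intro X Y Z
      have : s X Y Z = - s X Y Z := by
        calc s X Y Z = - s X Z Y := hskew X Y Z
        _ = - s Z X Y := by rw [hsymm X Z Y]
        _ = s Z Y X := by rw [hskew Z X Y]; ring
        _ = s Y Z X := by rw [hsymm Z Y X]
        _ = - s Y X Z := by rw [hskew Y Z X]
        _ = - s X Y Z := by rw [hsymm Y X Z]
      linarith
    have hD0 : H X Y - F X Y = 0 := by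
      have h := hzero X Y (H X Y - F X Y)
      simp only [hs] at h
      exact inner_self_eq_zero.mp h
    exact sub_eq_zero.mp hD0
  constructor
  · refine ⟨F, ⟨hF1, hF2⟩, ?_⟩
    intro H hH
    ext X Y
    exact key H hH X Y
  · intro H hH X Y
    rw [key H hH X Y, hFapp, hu, hu, hu₁, hu₁]
end
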